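/- arXiv:2206.07242 — 5 statements merged into one kernel-verified Lean document; each statement's English description precedes it below -/
import Mathlib

section
/- Let λ_i ∈ [0,1] and β_i ∈ (0,1]. If δ_i(z) ≠ 0, then the set of maximizers of the payoff ζ ↦ f_i(ζ, z) over the strategy set {-1,+1} × [-1,1] is the singleton (ζ_a, ζ_o) with ζ_a = sgn(δ_i(z)) and ζ_o = (1-λ_i)[(1-γ_i) Σ_{j} w_{ij} y_j + γ_i u_i] + λ_i sgn(δ_i(z)). If δ_i(z) = 0, then the set of maximizers is exactly the two-element set {(+1, ζ_o⁺), (-1, ζ_o⁻)} with ζ_o⁺ = (1-λ_i)[(1-γ_i) Σ_j w_{ij} y_j + γ_i u_i] + λ_i and ζ_o⁻ = (1-λ_i)[(1-γ_i) Σ_j w_{ij} y_j + γ_i u_i] - λ_i. -/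
open Finset

lemma sum_lin' {n : ℕ} (f g : Fin n → ℝ) (c1 c2 : ℝ) (hf : ∑ j, f j = 1) :
    ∑ j, f j * (c1 + c2 * g j) = c1 + c2 * ∑ j, f j * g j := by
  rw [Finset.sum_congr rfl
    (fun j _ => (by ring : f j * (c1 + c2 * g j) = f j * c1 + c2 * (f j * g j))),
    Finset.sum_add_distrib, ← Finset.sum_mul, ← Finset.mul_sum, hf, one_mul]

lemma sum_quad' {n : ℕ} (f g : Fin n → ℝ) (c : ℝ) (hf : ∑ j, f j = 1) :
    ∑ j, f j * (c - g j) ^ 2 = c ^ 2 - 2 * c * ∑ j, f j * g j + ∑ j, f j * g j ^ 2 := by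
  rw [Finset.sum_congr rfl
    (fun j _ => (by ring :
      f j * (c - g j) ^ 2 = f j * c ^ 2 + ((-2 * c) * (f j * g j) + f j * g j ^ 2))),
    Finset.sum_add_distrib, Finset.sum_add_distrib, ← Finset.sum_mul, ← Finset.mul_sum, hf]
  ring


/-- The payoff of agent `i` for strategy `ζ = (ζ_a, ζ_o)` given the state `(x, y)`. -/
noncomputable def payoff {n : ℕ} (A W : Fin n → Fin n → ℝ) (α lam β γ : ℝ)
    (u x y : Fin n → ℝ) (i : Fin n) (ζ : ℝ × ℝ) : ℝ :=
  lam * (1 - β) / 4 *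
      ∑ j, A i j * ((1 - x j) * (1 - ζ.1) + (1 + α) * (1 + x j) * (1 + ζ.1))
    - 1 / 2 * β * (1 - lam) * (1 - γ) * ∑ j, W i j * (ζ.2 - y j) ^ 2
    - 1 / 2 * β * (1 - lam) * γ * (ζ.2 - u i) ^ 2
    - 1 / 2 * lam * β * (ζ.1 - ζ.2) ^ 2

/-- The quantity `δ_i(z)`. -/
noncomputable def deltaFn {n : ℕ} (A W : Fin n → Fin n → ℝ) (α lam β γ : ℝ)
    (u x y : Fin n → ℝ) (i : Fin n) : ℝ :=
  2 * lam * β * (1 - lam) * ((1 - γ) * ∑ j, W i j * y j + γ * u i)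
    + (1 - β) * lam / 2 * ∑ j, A i j * (2 * x j + α * (1 + x j))

/-- The strategy set `{-1,+1} × [-1,1]`. -/
def stratSet : Set (ℝ × ℝ) := {p | (p.1 = -1 ∨ p.1 = 1) ∧ p.2 ∈ Set.Icc (-1 : ℝ) 1}

set_option maxHeartbeats 1000000 in
theorem stmt0 {n : ℕ} (hn : 2 ≤ n) (A W : Fin n → Fin n → ℝ) (α lam β γ : ℝ)
    (u x y : Fin n → ℝ) (i : Fin n)
    (hA : ∀ j k, 0 ≤ A j k) (hW : ∀ j k, 0 ≤ W j k)
    (hArow : ∀ j, ∑ k, A j k = 1) (hWrow : ∀ j, ∑ k, W j k = 1)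
    (hα : 0 ≤ α) (hlam : lam ∈ Set.Icc (0 : ℝ) 1) (hβ : β ∈ Set.Ioc (0 : ℝ) 1)
    (hγ : γ ∈ Set.Icc (0 : ℝ) 1) (hu : ∀ j, u j ∈ Set.Icc (-1 : ℝ) 1)
    (hx : ∀ j, x j = -1 ∨ x j = 1) (hy : ∀ j, y j ∈ Set.Icc (-1 : ℝ) 1) :
    (deltaFn A W α lam β γ u x y i ≠ 0 →
      {p ∈ stratSet | ∀ q ∈ stratSet,
          payoff A W α lam β γ u x y i q ≤ payoff A W α lam β γ u x y i p} =
        {(Real.sign (deltaFn A W α lam β γ u x y i),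
          (1 - lam) * ((1 - γ) * ∑ j, W i j * y j + γ * u i) +
            lam * Real.sign (deltaFn A W α lam β γ u x y i))}) ∧
    (deltaFn A W α lam β γ u x y i = 0 →
      {p ∈ stratSet | ∀ q ∈ stratSet,
          payoff A W α lam β γ u x y i q ≤ payoff A W α lam β γ u x y i p} =
        {(1, (1 - lam) * ((1 - γ) * ∑ j, W i j * y j + γ * u i) + lam),
         (-1, (1 - lam) * ((1 - γ) * ∑ j, W i j * y j + γ * u i) - lam)}) := by
  obtain ⟨hβ0, hβ1⟩ := hβ
  obtain ⟨hl0, hl1⟩ := hlam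
  obtain ⟨hγ0, hγ1⟩ := hγ
  set D := deltaFn A W α lam β γ u x y i with hDset
  set Sx := ∑ j, A i j * x j with hSxdef
  set Sy := ∑ j, W i j * y j with hSydef
  set Sy2 := ∑ j, W i j * y j ^ 2 with hSy2def
  set M := (1 - γ) * Sy + γ * u i with hMdef
  -- payoff in closed form
  have hpay : ∀ ζa ζo : ℝ, payoff A W α lam β γ u x y i (ζa, ζo) =
      lam * (1 - β) / 4 *
        (((1 - ζa) + (1 + α) * (1 + ζa)) + ((-(1 - ζa)) + (1 + α) * (1 + ζa)) * Sx)
      - 1 / 2 * β * (1 - lam) * (1 - γ) * (ζo ^ 2 - 2 * ζo * Sy + Sy2)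
      - 1 / 2 * β * (1 - lam) * γ * (ζo - u i) ^ 2
      - 1 / 2 * lam * β * (ζa - ζo) ^ 2 := by
    intro ζa ζo
    unfold payoff
    rw [Finset.sum_congr rfl (fun j _ => (by ring :
      A i j * ((1 - x j) * (1 - ζa) + (1 + α) * (1 + x j) * (1 + ζa)) =
      A i j * (((1 - ζa) + (1 + α) * (1 + ζa)) + (((-(1 - ζa)) + (1 + α) * (1 + ζa)) * x j)))),
      sum_lin' (A i) x _ _ (hArow i), sum_quad' (W i) y ζo (hWrow i)]
  have hDdef : D = 2 * lam * β * (1 - lam) * M + (1 - β) * lam / 2 * (α + (2 + α) * Sx) := by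
    rw [hDset, hMdef, hSydef, hSxdef]
    unfold deltaFn
    rw [Finset.sum_congr rfl (fun j _ => (by ring :
      A i j * (2 * x j + α * (1 + x j)) = A i j * (α + (2 + α) * x j))),
      sum_lin' (A i) x _ _ (hArow i)]
  set C := payoff A W α lam β γ u x y i (1, (1 - lam) * M + lam) with hCdef
  have key : ∀ ζa ζo : ℝ, (ζa = -1 ∨ ζa = 1) →
      payoff A W α lam β γ u x y i (ζa, ζo) =
        C - β / 2 * (ζo - ((1 - lam) * M + lam * ζa)) ^ 2 + (ζa - 1) * D / 2 := by
    intro ζa ζo h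
    rw [hCdef, hpay, hpay, hDdef, hMdef]
    rcases h with h | h <;> subst h <;> ring
  -- bounds
  have hSyub : Sy ≤ 1 := by
    rw [hSydef, ← hWrow i]
    apply Finset.sum_le_sum
    intro j _
    nlinarith [(hy j).1, (hy j).2, hW i j]
  have hSylb : (-1 : ℝ) ≤ Sy := by
    rw [hSydef]
    have h2 : ∑ j, -(W i j) ≤ ∑ j, W i j * y j := by
      apply Finset.sum_le_sum
      intro j _
      nlinarith [(hy j).1, (hy j).2, hW i j]
    rw [Finset.sum_neg_distrib, hWrow i] at h2
    linarith
  have hMub : M ≤ 1 := by rw [hMdef]; nlinarith [(hu i).1, (hu i).2]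
  have hMlb : (-1 : ℝ) ≤ M := by rw [hMdef]; nlinarith [(hu i).1, (hu i).2]
  clear_value C M Sy2 Sy Sx D
  clear hpay hSydef hSxdef hSy2def hMdef hCdef hDset
  have hfeas : ∀ s : ℝ, s = -1 ∨ s = 1 →
      ((s, (1 - lam) * M + lam * s) : ℝ × ℝ) ∈ stratSet := by
    intro s hs
    refine ⟨hs, ?_, ?_⟩ <;> dsimp only <;> rcases hs with h | h <;> rw [h] <;> nlinarith
  constructor
  · -- δ ≠ 0
    intro hD0
    have hsgn : (Real.sign D = 1 ∧ 0 < D) ∨ (Real.sign D = -1 ∧ D < 0) := by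
      rcases lt_or_gt_of_ne hD0 with h | h
      · exact Or.inr ⟨Real.sign_of_neg h, h⟩
      · exact Or.inl ⟨Real.sign_of_pos h, h⟩
    have hσpm : Real.sign D = -1 ∨ Real.sign D = 1 := by
      rcases hsgn with ⟨h, _⟩ | ⟨h, _⟩
      · exact Or.inr h
      · exact Or.inl h
    have htfeas := hfeas _ hσpm
    have hvt : payoff A W α lam β γ u x y i (Real.sign D, (1 - lam) * M + lam * Real.sign D)
        = C + (Real.sign D - 1) * D / 2 := by
      rw [key _ _ hσpm]; ring
    have hub : ∀ q ∈ stratSet, payoff A W α lam β γ u x y i q ≤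
        C + (Real.sign D - 1) * D / 2 := by
      intro q hq
      obtain ⟨hq1, -⟩ := hq
      have hk := key q.1 q.2 hq1
      rw [Prod.mk.eta] at hk
      rw [hk]
      rcases hsgn with ⟨hs, hd⟩ | ⟨hs, hd⟩ <;> rcases hq1 with h | h <;> rw [hs, h] <;>
        nlinarith [sq_nonneg (q.2 - ((1 - lam) * M + lam * (-1 : ℝ))),
          sq_nonneg (q.2 - ((1 - lam) * M + lam * (1 : ℝ)))]
    ext p
    simp only [Set.mem_sep_iff, Set.mem_singleton_iff]
    constructor
    · rintro ⟨hps, hmax⟩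
      have h1 := hmax _ htfeas
      rw [hvt] at h1
      have hk := key p.1 p.2 hps.1
      rw [Prod.mk.eta] at hk
      rw [hk] at h1
      rcases hsgn with ⟨hs, hd⟩ | ⟨hs, hd⟩ <;> rcases hps.1 with h | h <;>
        rw [hs, h] at h1
      · exfalso; nlinarith [sq_nonneg (p.2 - ((1 - lam) * M + lam * (-1 : ℝ)))]
      · have h2 : (p.2 - ((1 - lam) * M + lam * (1 : ℝ))) ^ 2 = 0 :=
          le_antisymm (by nlinarith) (sq_nonneg _)
        have h3 := sq_eq_zero_iff.mp h2
        refine Prod.ext_iff.mpr ⟨?_, ?_⟩ <;> dsimp only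
        · rw [h, hs]
        · rw [hs]; linarith
      · have h2 : (p.2 - ((1 - lam) * M + lam * (-1 : ℝ))) ^ 2 = 0 :=
          le_antisymm (by nlinarith) (sq_nonneg _)
        have h3 := sq_eq_zero_iff.mp h2
        refine Prod.ext_iff.mpr ⟨?_, ?_⟩ <;> dsimp only
        · rw [h, hs]
        · rw [hs]; linarith
      · exfalso; nlinarith [sq_nonneg (p.2 - ((1 - lam) * M + lam * (1 : ℝ)))]
    · rintro rfl
      exact ⟨htfeas, fun q hq => by rw [hvt]; exact hub q hq⟩
  · -- δ = 0
    intro hD0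
    have hv1 : payoff A W α lam β γ u x y i (1, (1 - lam) * M + lam) = C := by
      rw [key 1 _ (Or.inr rfl), hD0]; ring
    have hv2 : payoff A W α lam β γ u x y i (-1, (1 - lam) * M - lam) = C := by
      rw [key (-1) _ (Or.inl rfl), hD0]; ring
    have hf1 : ((1 : ℝ), (1 - lam) * M + lam) ∈ stratSet := by
      have := hfeas 1 (Or.inr rfl)
      simpa using this
    have hf2 : ((-1 : ℝ), (1 - lam) * M - lam) ∈ stratSet := by
      have := hfeas (-1) (Or.inl rfl)
      have he : (1 - lam) * M + lam * (-1 : ℝ) = (1 - lam) * M - lam := by ring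
      rwa [he] at this
    have hub : ∀ q ∈ stratSet, payoff A W α lam β γ u x y i q ≤ C := by
      intro q hq
      obtain ⟨hq1, -⟩ := hq
      have hk := key q.1 q.2 hq1
      rw [Prod.mk.eta] at hk
      rw [hk, hD0]
      nlinarith [sq_nonneg (q.2 - ((1 - lam) * M + lam * q.1))]
    ext p
    simp only [Set.mem_sep_iff, Set.mem_insert_iff, Set.mem_singleton_iff]
    constructor
    · rintro ⟨hps, hmax⟩
      have h1 := hmax _ hf1
      rw [hv1] at h1
      have hk := key p.1 p.2 hps.1
      rw [Prod.mk.eta] at hk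
      rw [hk, hD0] at h1
      have h2 : (p.2 - ((1 - lam) * M + lam * p.1)) ^ 2 = 0 :=
        le_antisymm (by nlinarith) (sq_nonneg _)
      have h3 : p.2 = (1 - lam) * M + lam * p.1 := by
        have := sq_eq_zero_iff.mp h2; linarith
      rcases hps.1 with h | h
      · right
        refine Prod.ext_iff.mpr ⟨?_, ?_⟩ <;> dsimp only
        · exact h
        · rw [h3, h]; ring
      · left
        refine Prod.ext_iff.mpr ⟨?_, ?_⟩ <;> dsimp only
        · exact h
        · rw [h3, h]; ring
    · rintro (rfl | rfl)
      · exact ⟨hf1, fun q hq => by rw [hv1]; exact hub q hq⟩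
      · exact ⟨hf2, fun q hq => by rw [hv2]; exact hub q hq⟩
end

section
/- Let λ_i ∈ [0,1], β_i ∈ (0,1], and suppose W is row-stochastic with nonnegative entries, y_j ∈ [-1,1] for all j, and u_i ∈ [-1,1]. Then the function g(ζ_o) = f_i((+1, ζ_o), z), viewed as a function of ζ_o ∈ ℝ, has second derivative equal to -β_i (so g is strictly concave), its unique global maximizer is ζ_o⁺ = (1-λ_i)(1-γ_i) Σ_j w_{ij} y_j + (1-λ_i)γ_i u_i + λ_i, and ζ_o⁺ ∈ [-1,+1]. Analogously, the function h(ζ_o) = f_i((-1, ζ_o), z) is strictly concave with unique maximizer ζ_o⁻ = (1-λ_i)(1-γ_i) Σ_j w_{ij} y_j + (1-λ_i)γ_i u_i - λ_i, and ζ_o⁻ ∈ [-1,+1]. -/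
open Finset

/-!
For a fixed action `a`, the payoff is a quadratic polynomial in the opinion `t` whose leading
coefficient is `-β/2` (the three quadratic penalties carry total weight `β` because `W` is
row-stochastic). Completing the square writes it as `c - β/2 (t - z)²`, with `z` the weighted
average of the neighbours' mean opinion, the prejudice `u i` and the action `a`; concavity, the
second derivative and the unique maximizer are then read off the parabola. Since `z` is a convex
combination of points of `[-1, 1]`, it lies in `[-1, 1]`.
-/

open Set

section Parabola

variable (c : ℝ) {k : ℝ} (z : ℝ)

lemma deriv_deriv_const_sub_mul_sq (s : ℝ) :
    deriv (deriv fun t : ℝ => c - k / 2 * (t - z) ^ 2) s = -k := by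
  simp

lemma strictConcaveOn_const_sub_mul_sq (hk : 0 < k) :
    StrictConcaveOn ℝ univ fun t : ℝ => c - k / 2 * (t - z) ^ 2 := by
  refine strictConcaveOn_univ_of_deriv2_neg (by fun_prop) fun s => ?_
  rw [Function.iterate_succ_apply, Function.iterate_one, deriv_deriv_const_sub_mul_sq]
  exact neg_neg_of_pos hk

lemma isMaxOn_const_sub_mul_sq (hk : 0 ≤ k) :
    IsMaxOn (fun t : ℝ => c - k / 2 * (t - z) ^ 2) univ z := by
  refine isMaxOn_univ_iff.mpr fun t => ?_
  norm_num
  positivity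

end Parabola

/-- The paper's `ζ_o^±` is `opinionTarget W lam γ u y i (±1)`. -/
def opinionTarget {n : ℕ} (W : Fin n → Fin n → ℝ) (lam γ : ℝ) (u y : Fin n → ℝ) (i : Fin n)
    (a : ℝ) : ℝ :=
  (1 - lam) * (1 - γ) * (∑ j, W i j * y j) + (1 - lam) * γ * u i + lam * a

section Payoff

variable {n : ℕ} (A W : Fin n → Fin n → ℝ) (α lam β γ : ℝ) (u x y : Fin n → ℝ) (i : Fin n)

lemma sum_mul_sub_sq_of_sum_eq_one (hWrow : ∑ k, W i k = 1) (t : ℝ) :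
    ∑ j, W i j * (t - y j) ^ 2 = t ^ 2 - 2 * t * (∑ j, W i j * y j) + ∑ j, W i j * y j ^ 2 := by
  have h : ∀ j, W i j * (t - y j) ^ 2 = t ^ 2 * W i j - 2 * t * (W i j * y j) + W i j * y j ^ 2 :=
    fun j => by ring
  simp only [h, sum_add_distrib, sum_sub_distrib, ← mul_sum, hWrow]
  ring

lemma payoff_opinion_eq (hWrow : ∑ k, W i k = 1) (a : ℝ) :
    (fun t => payoff A W α lam β γ u x y i (a, t)) = fun t =>
      payoff A W α lam β γ u x y i (a, opinionTarget W lam γ u y i a) -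
        β / 2 * (t - opinionTarget W lam γ u y i a) ^ 2 := by
  funext t
  simp only [payoff, sum_mul_sub_sq_of_sum_eq_one W y i hWrow, opinionTarget]
  ring

theorem payoff_opinion_maximizer (hWrow : ∑ k, W i k = 1) (hβ : 0 < β) (a : ℝ) :
    let f := fun t => payoff A W α lam β γ u x y i (a, t)
    let z := opinionTarget W lam γ u y i a
    (∀ s, deriv (deriv f) s = -β) ∧ StrictConcaveOn ℝ univ f ∧ (∀ t, f t ≤ f z) ∧
      ∀ s, (∀ t, f t ≤ f s) → s = z := by
  intro f z
  have hf : f = fun t => f z - β / 2 * (t - z) ^ 2 :=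
    payoff_opinion_eq A W α lam β γ u x y i hWrow a
  have hconc : StrictConcaveOn ℝ univ f := hf ▸ strictConcaveOn_const_sub_mul_sq _ _ hβ
  have hmax : IsMaxOn f univ z := hf ▸ isMaxOn_const_sub_mul_sq _ _ hβ.le
  refine ⟨fun s => hf ▸ deriv_deriv_const_sub_mul_sq _ _ s, hconc,
    fun t => isMaxOn_univ_iff.mp hmax t, fun s hs => ?_⟩
  exact hconc.eq_of_isMaxOn (isMaxOn_univ_iff.mpr hs) hmax (mem_univ s) (mem_univ z)

end Payoff

lemma opinionTarget_mem_Icc {n : ℕ} (W : Fin n → Fin n → ℝ) (lam γ : ℝ) (u y : Fin n → ℝ)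
    (i : Fin n) (hW : ∀ j, 0 ≤ W i j) (hWrow : ∑ j, W i j = 1) (hlam : lam ∈ Icc (0 : ℝ) 1)
    (hγ : γ ∈ Icc (0 : ℝ) 1) (hu : u i ∈ Icc (-1 : ℝ) 1) (hy : ∀ j, y j ∈ Icc (-1 : ℝ) 1)
    (a : ℝ) (ha : a ∈ Icc (-1 : ℝ) 1) :
    opinionTarget W lam γ u y i a ∈ Icc (-1 : ℝ) 1 := by
  have hconv := convex_Icc (𝕜 := ℝ) (-1 : ℝ) 1
  have hmean : ∑ j, W i j * y j ∈ Icc (-1 : ℝ) 1 :=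
    hconv.sum_mem (fun j _ => hW j) hWrow fun j _ => hy j
  have hinner : (1 - γ) * ∑ j, W i j * y j + γ * u i ∈ Icc (-1 : ℝ) 1 :=
    hconv hmean hu (sub_nonneg.mpr hγ.2) hγ.1 (sub_add_cancel 1 γ)
  have h := hconv hinner ha (sub_nonneg.mpr hlam.2) hlam.1 (sub_add_cancel 1 lam)
  convert h using 1
  simp only [opinionTarget, smul_eq_mul]
  ring

theorem stmt2_general {n : ℕ} (A W : Fin n → Fin n → ℝ) (α lam β γ : ℝ)
    (u x y : Fin n → ℝ) (i : Fin n)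
    (hW : ∀ j k, 0 ≤ W j k)
    (hWrow : ∀ j, ∑ k, W j k = 1)
    (hlam : lam ∈ Set.Icc (0 : ℝ) 1) (hβ : β ∈ Set.Ioc (0 : ℝ) 1)
    (hγ : γ ∈ Set.Icc (0 : ℝ) 1) (hu : ∀ j, u j ∈ Set.Icc (-1 : ℝ) 1)
    (hy : ∀ j, y j ∈ Set.Icc (-1 : ℝ) 1)
    (zp zm : ℝ)
    (hzp : zp = (1 - lam) * (1 - γ) * (∑ j, W i j * y j) + (1 - lam) * γ * u i + lam)
    (hzm : zm = (1 - lam) * (1 - γ) * (∑ j, W i j * y j) + (1 - lam) * γ * u i - lam) :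
    -- the map `ζ_o ↦ f_i((+1, ζ_o), z)`
    ((∀ s : ℝ, deriv (deriv (fun t : ℝ => payoff A W α lam β γ u x y i (1, t))) s = -β) ∧
      StrictConcaveOn ℝ Set.univ (fun t : ℝ => payoff A W α lam β γ u x y i (1, t)) ∧
      (∀ t : ℝ, payoff A W α lam β γ u x y i (1, t) ≤ payoff A W α lam β γ u x y i (1, zp)) ∧
      (∀ s : ℝ, (∀ t : ℝ, payoff A W α lam β γ u x y i (1, t) ≤
          payoff A W α lam β γ u x y i (1, s)) → s = zp) ∧
      zp ∈ Set.Icc (-1 : ℝ) 1) ∧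
    -- the map `ζ_o ↦ f_i((-1, ζ_o), z)`
    ((∀ s : ℝ, deriv (deriv (fun t : ℝ => payoff A W α lam β γ u x y i (-1, t))) s = -β) ∧
      StrictConcaveOn ℝ Set.univ (fun t : ℝ => payoff A W α lam β γ u x y i (-1, t)) ∧
      (∀ t : ℝ, payoff A W α lam β γ u x y i (-1, t) ≤ payoff A W α lam β γ u x y i (-1, zm)) ∧
      (∀ s : ℝ, (∀ t : ℝ, payoff A W α lam β γ u x y i (-1, t) ≤
          payoff A W α lam β γ u x y i (-1, s)) → s = zm) ∧
      zm ∈ Set.Icc (-1 : ℝ) 1) := by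
  have hzp' : zp = opinionTarget W lam γ u y i 1 := by rw [hzp, opinionTarget, mul_one]
  have hzm' : zm = opinionTarget W lam γ u y i (-1) := by rw [hzm, opinionTarget]; ring
  have hmem := opinionTarget_mem_Icc W lam γ u y i (hW i) (hWrow i) hlam hγ (hu i) hy
  subst hzp' hzm'
  obtain ⟨hp₁, hp₂, hp₃, hp₄⟩ := payoff_opinion_maximizer A W α lam β γ u x y i (hWrow i) hβ.1 1
  obtain ⟨hm₁, hm₂, hm₃, hm₄⟩ := payoff_opinion_maximizer A W α lam β γ u x y i (hWrow i) hβ.1 (-1)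
  exact ⟨⟨hp₁, hp₂, hp₃, hp₄, hmem 1 (by norm_num)⟩, hm₁, hm₂, hm₃, hm₄, hmem (-1) (by norm_num)⟩

theorem stmt2 {n : ℕ} (hn : 2 ≤ n) (A W : Fin n → Fin n → ℝ) (α lam β γ : ℝ)
    (u x y : Fin n → ℝ) (i : Fin n)
    (hA : ∀ j k, 0 ≤ A j k) (hW : ∀ j k, 0 ≤ W j k)
    (hArow : ∀ j, ∑ k, A j k = 1) (hWrow : ∀ j, ∑ k, W j k = 1)
    (hα : 0 ≤ α) (hlam : lam ∈ Set.Icc (0 : ℝ) 1) (hβ : β ∈ Set.Ioc (0 : ℝ) 1)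
    (hγ : γ ∈ Set.Icc (0 : ℝ) 1) (hu : ∀ j, u j ∈ Set.Icc (-1 : ℝ) 1)
    (hx : ∀ j, x j = -1 ∨ x j = 1) (hy : ∀ j, y j ∈ Set.Icc (-1 : ℝ) 1)
    (zp zm : ℝ)
    (hzp : zp = (1 - lam) * (1 - γ) * (∑ j, W i j * y j) + (1 - lam) * γ * u i + lam)
    (hzm : zm = (1 - lam) * (1 - γ) * (∑ j, W i j * y j) + (1 - lam) * γ * u i - lam) :
    -- the map `ζ_o ↦ f_i((+1, ζ_o), z)`
    ((∀ s : ℝ, deriv (deriv (fun t : ℝ => payoff A W α lam β γ u x y i (1, t))) s = -β) ∧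
      StrictConcaveOn ℝ Set.univ (fun t : ℝ => payoff A W α lam β γ u x y i (1, t)) ∧
      (∀ t : ℝ, payoff A W α lam β γ u x y i (1, t) ≤ payoff A W α lam β γ u x y i (1, zp)) ∧
      (∀ s : ℝ, (∀ t : ℝ, payoff A W α lam β γ u x y i (1, t) ≤
          payoff A W α lam β γ u x y i (1, s)) → s = zp) ∧
      zp ∈ Set.Icc (-1 : ℝ) 1) ∧
    -- the map `ζ_o ↦ f_i((-1, ζ_o), z)`
    ((∀ s : ℝ, deriv (deriv (fun t : ℝ => payoff A W α lam β γ u x y i (-1, t))) s = -β) ∧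
      StrictConcaveOn ℝ Set.univ (fun t : ℝ => payoff A W α lam β γ u x y i (-1, t)) ∧
      (∀ t : ℝ, payoff A W α lam β γ u x y i (-1, t) ≤ payoff A W α lam β γ u x y i (-1, zm)) ∧
      (∀ s : ℝ, (∀ t : ℝ, payoff A W α lam β γ u x y i (-1, t) ≤
          payoff A W α lam β γ u x y i (-1, s)) → s = zm) ∧
      zm ∈ Set.Icc (-1 : ℝ) 1) :=
  stmt2_general A W α lam β γ u x y i hW hWrow hlam hβ hγ hu hy zp zm hzp hzm
end

section
/- Let λ_i ∈ [0,1] and β_i ∈ (0,1]. With ζ_o⁺ = (1-λ_i)(1-γ_i) Σ_j w_{ij} y_j + (1-λ_i)γ_i u_i + λ_i and ζ_o⁻ = (1-λ_i)(1-γ_i) Σ_j w_{ij} y_j + (1-λ_i)γ_i u_i - λ_i, the difference of the two constrained maxima of the payoff equals δ_i(z); that is, f_i((+1, ζ_o⁺), z) - f_i((-1, ζ_o⁻), z) = δ_i(z). -/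
open Finset

theorem stmt3 {n : ℕ} (hn : 2 ≤ n) (A W : Fin n → Fin n → ℝ) (α lam β γ : ℝ)
    (u x y : Fin n → ℝ) (i : Fin n)
    (hA : ∀ j k, 0 ≤ A j k) (hW : ∀ j k, 0 ≤ W j k)
    (hArow : ∀ j, ∑ k, A j k = 1) (hWrow : ∀ j, ∑ k, W j k = 1)
    (hα : 0 ≤ α) (hlam : lam ∈ Set.Icc (0 : ℝ) 1) (hβ : β ∈ Set.Ioc (0 : ℝ) 1)
    (hγ : γ ∈ Set.Icc (0 : ℝ) 1) (hu : ∀ j, u j ∈ Set.Icc (-1 : ℝ) 1)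
    (hx : ∀ j, x j = -1 ∨ x j = 1) (hy : ∀ j, y j ∈ Set.Icc (-1 : ℝ) 1)
    (zp zm : ℝ)
    (hzp : zp = (1 - lam) * (1 - γ) * (∑ j, W i j * y j) + (1 - lam) * γ * u i + lam)
    (hzm : zm = (1 - lam) * (1 - γ) * (∑ j, W i j * y j) + (1 - lam) * γ * u i - lam) :
    payoff A W α lam β γ u x y i (1, zp) - payoff A W α lam β γ u x y i (-1, zm) =
      deltaFn A W α lam β γ u x y i := by
  have hAlin : ∀ c d : ℝ, ∑ j, A i j * (c + d * x j) = c + d * ∑ j, A i j * x j := by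
    intro c d
    simp only [mul_add, Finset.sum_add_distrib, ← Finset.sum_mul, hArow i, one_mul,
      mul_left_comm, ← Finset.mul_sum]
  have hWquad : ∀ z : ℝ, ∑ j, W i j * (z - y j) ^ 2 =
      z ^ 2 - 2 * z * (∑ j, W i j * y j) + ∑ j, W i j * y j ^ 2 := by
    intro z
    have : ∀ j, W i j * (z - y j) ^ 2 =
        W i j * z ^ 2 + (-2 * z) * (W i j * y j) + W i j * y j ^ 2 := by
      intro j; ring
    simp only [this, Finset.sum_add_distrib, ← Finset.sum_mul, ← Finset.mul_sum, hArow,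
      hWrow i]
    ring
  have hA1 : ∑ j, A i j * ((1 - x j) * (1 - (1:ℝ)) + (1 + α) * (1 + x j) * (1 + 1)) =
      (2 + 2*α) + (2 + 2*α) * ∑ j, A i j * x j := by
    rw [← hAlin]; apply Finset.sum_congr rfl; intro j _; ring
  have hA2 : ∑ j, A i j * ((1 - x j) * (1 - (-1:ℝ)) + (1 + α) * (1 + x j) * (1 + -1)) =
      (2:ℝ) + (-2) * ∑ j, A i j * x j := by
    rw [← hAlin]; apply Finset.sum_congr rfl; intro j _; ring
  have hA3 : ∑ j, A i j * (2 * x j + α * (1 + x j)) =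
      α + (2 + α) * ∑ j, A i j * x j := by
    rw [← hAlin]; apply Finset.sum_congr rfl; intro j _; ring
  simp only [payoff, deltaFn, hA1, hA2, hA3, hWquad]
  subst hzp hzm
  ring
end

section
/- Consider the coevolutionary model in which agents update their actions and opinions by the best-response update rule, and suppose Assumption 1 holds. If agent i is active at time t and x_i(t+1) ≠ x_i(t), then Φ(z(t+1)) - Φ(z(t)) > min_{k∈V} ξ λ (1-β) a_{kk} > 0, where ξ = 1/(β(1-λ)(1-γ)). -/
open Finset

/-- The potential function `Φ` of the coevolutionary game, with
`η = λ(1-β)/(4β(1-λ)(1-γ))`. -/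
noncomputable def coevPhi {n : ℕ} (A W : Fin n → Fin n → ℝ) (α lam β γ : ℝ)
    (u x y : Fin n → ℝ) : ℝ :=
  (∑ i, ∑ j ∈ Finset.univ.erase i,
      lam * (1 - β) / (4 * β * (1 - lam) * (1 - γ)) * (A i j / 2) *
        ((1 + α) * (1 + x j) * (1 + x i) + (1 - x i) * (1 - x j)))
    - 1 / 2 * ∑ i, ∑ j, W i j / 2 * (y i - y j) ^ 2
    - 1 / 2 * ∑ k, γ / (1 - γ) * (y k - u k) ^ 2
    - 1 / 2 * ∑ k, lam / ((1 - lam) * (1 - γ)) * (y k - x k) ^ 2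

/-- `S(d; x_i)`: `+1` if `d > 0`, `-1` if `d < 0`, and `x_i` if `d = 0`. -/
noncomputable def brSign (d xi : ℝ) : ℝ := if 0 < d then 1 else if d < 0 then -1 else xi

/-! Only the active agent `i` changes state, so by the symmetry of `A` and `W` the potential
changes only through the terms involving `i`. Completing the square in the new opinion, which is
the best response `(1 - λ) m + λ x'ᵢ` with `m = (1 - γ) ∑ⱼ wᵢⱼ yⱼ + γ uᵢ`, a flip `x'ᵢ = -xᵢ`
changes `Φ` by
`wᵢᵢ/2 (y'ᵢ - yᵢ)² + (yᵢ - (1 - λ) m - λ xᵢ)² / (2(1 - λ)(1 - γ))`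
`+ ξ (λ(1 - β) aᵢᵢ (1 + α(1 + xᵢ)/2) - xᵢ δᵢ)`.
The first term appears because `Φ` has no self-pair. An agent only flips when `xᵢ δᵢ < 0`, so
every term is nonnegative and the last one exceeds `ξ λ (1 - β) aᵢᵢ`. -/

section PairSums

variable {ι R : Type*} [Fintype ι] [CommRing R]

theorem sum_sub_sum_of_eq_off (f g : ι → R) (i : ι) (h : ∀ k, k ≠ i → f k = g k) :
    ∑ k, f k - ∑ k, g k = f i - g i := by
  rw [← Finset.sum_sub_distrib]
  exact Fintype.sum_eq_single i fun k hk => by rw [h k hk, sub_self]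

theorem sum_sum_erase_sub_of_eq_off [DecidableEq ι] (P : ι → ι → R → R → R)
    (hP : ∀ k j a b, P k j a b = P j k b a) (v v' : ι → R) (i : ι)
    (hv : ∀ j, j ≠ i → v' j = v j) :
    ∑ k, ∑ j ∈ univ.erase k, P k j (v' k) (v' j) - ∑ k, ∑ j ∈ univ.erase k, P k j (v k) (v j)
      = 2 * ∑ j ∈ univ.erase i, (P i j (v' i) (v j) - P i j (v i) (v j)) := by
  set F : ι → ι → R := fun k j => P k j (v' k) (v' j) - P k j (v k) (v j)
  have hrow : ∀ j ∈ univ.erase i, F i j = P i j (v' i) (v j) - P i j (v i) (v j) :=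
    fun j hj => by simp only [F, hv j (ne_of_mem_erase hj)]
  have hcol : ∀ k ∈ univ.erase i, ∑ j ∈ univ.erase k, F k j = F i k := by
    intro k hk
    have hki := ne_of_mem_erase hk
    rw [Finset.sum_eq_single_of_mem i (mem_erase.mpr ⟨hki.symm, mem_univ i⟩)]
    · simp only [F, hP k i]
    · intro j _ hji
      simp only [F, hv k hki, hv j hji, sub_self]
  calc _ = ∑ k, ∑ j ∈ univ.erase k, F k j := by
        simp only [F, ← Finset.sum_sub_distrib]
    _ = ∑ j ∈ univ.erase i, F i j + ∑ k ∈ univ.erase i, ∑ j ∈ univ.erase k, F k j :=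
        (add_sum_erase _ _ (mem_univ i)).symm
    _ = _ := by rw [sum_congr rfl hcol, ← two_mul, sum_congr rfl hrow]

end PairSums

theorem coevPhi_sub_of_eq_off {n : ℕ} (A W : Fin n → Fin n → ℝ) (α lam β γ : ℝ)
    (u x y x' y' : Fin n → ℝ) (i : Fin n)
    (hAsymm : ∀ j k, A j k = A k j) (hWsymm : ∀ j k, W j k = W k j) (hWrow : ∑ k, W i k = 1)
    (hx : ∀ j, j ≠ i → x' j = x j) (hy : ∀ j, j ≠ i → y' j = y j) :
    coevPhi A W α lam β γ u x' y' - coevPhi A W α lam β γ u x y =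
      lam * (1 - β) / (4 * β * (1 - lam) * (1 - γ)) * (x' i - x i) *
          (∑ j, A i j * (2 * x j + α * (1 + x j)) - A i i * (2 * x i + α * (1 + x i)))
        - 1 / 2 * (y' i ^ 2 - y i ^ 2 - 2 * (y' i - y i) * ∑ j, W i j * y j)
        + W i i / 2 * (y' i - y i) ^ 2
        - 1 / 2 * (γ / (1 - γ)) * ((y' i - u i) ^ 2 - (y i - u i) ^ 2)
        - 1 / 2 * (lam / ((1 - lam) * (1 - γ))) * ((y' i - x' i) ^ 2 - (y i - x i) ^ 2) := by
  set η := lam * (1 - β) / (4 * β * (1 - lam) * (1 - γ))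
  have hcoord := sum_sum_erase_sub_of_eq_off
    (fun k j a b => η * (A k j / 2) * ((1 + α) * (1 + b) * (1 + a) + (1 - a) * (1 - b)))
    (fun k j a b => by simp only [hAsymm k j]; ring) x x' i hx
  have hcoord_row : 2 * ∑ j ∈ univ.erase i,
      (η * (A i j / 2) * ((1 + α) * (1 + x j) * (1 + x' i) + (1 - x' i) * (1 - x j)) -
        η * (A i j / 2) * ((1 + α) * (1 + x j) * (1 + x i) + (1 - x i) * (1 - x j)))
      = η * (x' i - x i) *
          (∑ j, A i j * (2 * x j + α * (1 + x j)) - A i i * (2 * x i + α * (1 + x i))) := by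
    rw [← sum_erase_eq_sub (mem_univ i), mul_sum, mul_sum]
    exact sum_congr rfl fun j _ => by ring
  have hdisagree := sum_sum_erase_sub_of_eq_off (fun k j a b => W k j / 2 * (a - b) ^ 2)
    (fun k j a b => by simp only [hWsymm k j]; ring) y y' i hy
  have hdisagree_row :
      2 * ∑ j ∈ univ.erase i, (W i j / 2 * (y' i - y j) ^ 2 - W i j / 2 * (y i - y j) ^ 2)
      = y' i ^ 2 - y i ^ 2 - 2 * (y' i - y i) * ∑ j, W i j * y j - W i i * (y' i - y i) ^ 2 := by
    have hexpand : ∑ j, (W i j / 2 * (y' i - y j) ^ 2 - W i j / 2 * (y i - y j) ^ 2)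
        = (y' i ^ 2 - y i ^ 2) / 2 * ∑ j, W i j - (y' i - y i) * ∑ j, W i j * y j := by
      rw [mul_sum, mul_sum, ← sum_sub_distrib]
      exact sum_congr rfl fun j _ => by ring
    rw [sum_erase_eq_sub (mem_univ i), hexpand, hWrow]
    ring
  have hdiag : ∀ (v : Fin n → ℝ) k, ∑ j, W k j / 2 * (v k - v j) ^ 2
      = ∑ j ∈ univ.erase k, W k j / 2 * (v k - v j) ^ 2 :=
    fun v k => (sum_erase univ (by simp)).symm
  have hconf := sum_sub_sum_of_eq_off (fun k => γ / (1 - γ) * (y' k - u k) ^ 2)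
    (fun k => γ / (1 - γ) * (y k - u k) ^ 2) i fun k hk => by simp only [hy k hk]
  have hcons := sum_sub_sum_of_eq_off (fun k => lam / ((1 - lam) * (1 - γ)) * (y' k - x' k) ^ 2)
    (fun k => lam / ((1 - lam) * (1 - γ)) * (y k - x k) ^ 2) i
    fun k hk => by simp only [hx k hk, hy k hk]
  unfold coevPhi
  simp only [hdiag]
  linear_combination hcoord + hcoord_row - 1 / 2 * (hdisagree + hdisagree_row)
    - 1 / 2 * hconf - 1 / 2 * hcons

theorem coevPhi_sub_of_flip {n : ℕ} (A W : Fin n → Fin n → ℝ) (α lam β γ : ℝ)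
    (u x y x' y' : Fin n → ℝ) (i : Fin n) (hβ : β ≠ 0) (hlam : lam ≠ 1) (hγ : γ ≠ 1)
    (hAsymm : ∀ j k, A j k = A k j) (hWsymm : ∀ j k, W j k = W k j) (hWrow : ∑ k, W i k = 1)
    (hx : ∀ j, j ≠ i → x' j = x j) (hy : ∀ j, j ≠ i → y' j = y j)
    (hxi : x i = 1 ∨ x i = -1) (hflip : x' i = -x i)
    (hyi : y' i = (1 - lam) * ((1 - γ) * ∑ j, W i j * y j + γ * u i) + lam * x' i) :
    coevPhi A W α lam β γ u x' y' - coevPhi A W α lam β γ u x y =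
      W i i / 2 * (y' i - y i) ^ 2
        + (y i - ((1 - lam) * ((1 - γ) * ∑ j, W i j * y j + γ * u i) + lam * x i)) ^ 2
          / (2 * (1 - lam) * (1 - γ))
        + 1 / (β * (1 - lam) * (1 - γ)) * (lam * (1 - β) * A i i * (1 + α * (1 + x i) / 2)
          - x i * deltaFn A W α lam β γ u x y i) := by
  have hlam' : 1 - lam ≠ 0 := sub_ne_zero.2 (Ne.symm hlam)
  have hγ' : 1 - γ ≠ 0 := sub_ne_zero.2 (Ne.symm hγ)
  rw [coevPhi_sub_of_eq_off A W α lam β γ u x y x' y' i hAsymm hWsymm hWrow hx hy, hyi, hflip]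
  unfold deltaFn
  rcases hxi with h | h <;> rw [h] <;> field_simp <;> ring

theorem lt_coevPhi_sub_of_flip {n : ℕ} (A W : Fin n → Fin n → ℝ) (α lam β γ : ℝ)
    (u x y x' y' : Fin n → ℝ) (i : Fin n) (hα : 0 ≤ α) (hlam0 : 0 ≤ lam) (hlam1 : lam < 1)
    (hβ0 : 0 < β) (hβ1 : β ≤ 1) (hγ1 : γ < 1) (hAii : 0 ≤ A i i) (hWii : 0 ≤ W i i)
    (hAsymm : ∀ j k, A j k = A k j) (hWsymm : ∀ j k, W j k = W k j) (hWrow : ∑ k, W i k = 1)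
    (hx : ∀ j, j ≠ i → x' j = x j) (hy : ∀ j, j ≠ i → y' j = y j)
    (hxi : x i = 1 ∨ x i = -1) (hflip : x' i = -x i)
    (hsign : x i * deltaFn A W α lam β γ u x y i < 0)
    (hyi : y' i = (1 - lam) * ((1 - γ) * ∑ j, W i j * y j + γ * u i) + lam * x' i) :
    1 / (β * (1 - lam) * (1 - γ)) * lam * (1 - β) * A i i <
      coevPhi A W α lam β γ u x' y' - coevPhi A W α lam β γ u x y := by
  have hlam1' : 0 < 1 - lam := sub_pos.2 hlam1
  have hβ1' : 0 ≤ 1 - β := sub_nonneg.2 hβ1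
  have hγ1' : 0 < 1 - γ := sub_pos.2 hγ1
  have hξ : 0 < 1 / (β * (1 - lam) * (1 - γ)) := by positivity
  have hselfloop : 0 ≤ W i i / 2 * (y' i - y i) ^ 2 := by positivity
  have hanchor : 0 ≤ (y i - ((1 - lam) * ((1 - γ) * ∑ j, W i j * y j + γ * u i)
      + lam * x i)) ^ 2 / (2 * (1 - lam) * (1 - γ)) := by positivity
  have hconformity : 0 ≤ lam * (1 - β) * A i i * (α * (1 + x i) / 2) := by
    have : 0 ≤ 1 + x i := by rcases hxi with h | h <;> linarith
    positivity
  have hflip_gain : lam * (1 - β) * A i i <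
      lam * (1 - β) * A i i * (1 + α * (1 + x i) / 2) - x i * deltaFn A W α lam β γ u x y i := by
    linarith
  rw [coevPhi_sub_of_flip A W α lam β γ u x y x' y' i hβ0.ne' hlam1.ne hγ1.ne hAsymm hWsymm hWrow
    hx hy hxi hflip hyi, mul_assoc, mul_assoc]
  linarith [mul_lt_mul_of_pos_left hflip_gain hξ]

theorem brSign_eq_one_or_neg_one {d c : ℝ} (hc : c = 1 ∨ c = -1) :
    brSign d c = 1 ∨ brSign d c = -1 := by
  unfold brSign
  split_ifs <;> simp_all

theorem brSign_of_ne {d c : ℝ} (hc : c = 1 ∨ c = -1) (h : brSign d c ≠ c) :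
    brSign d c = -c ∧ c * d < 0 := by
  unfold brSign at h ⊢
  rcases lt_trichotomy d 0 with hd | rfl | hd
  · rcases hc with rfl | rfl <;> simp_all [hd.not_gt]
  · simp_all
  · rcases hc with rfl | rfl <;> simp_all

theorem brSign_trajectory_eq_one_or_neg_one {ι : Type*} (x : ℕ → ι → ℝ) (σ : ℕ → ι) (d : ℕ → ℝ)
    (h0 : ∀ j, x 0 j = -1 ∨ x 0 j = 1) (hup : ∀ t, x (t + 1) (σ t) = brSign (d t) (x t (σ t)))
    (hkeep : ∀ t j, j ≠ σ t → x (t + 1) j = x t j) :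
    ∀ t j, x t j = 1 ∨ x t j = -1 := by
  intro t
  induction t with
  | zero => exact fun j => (h0 j).symm
  | succ t ih =>
    intro j
    by_cases hj : j = σ t
    · rw [hj, hup t]
      exact brSign_eq_one_or_neg_one (ih (σ t))
    · rw [hkeep t j hj]
      exact ih j

theorem stmt7 {n : ℕ} (hn : 2 ≤ n) (A W : Fin n → Fin n → ℝ) (α lam β γ : ℝ)
    (u : Fin n → ℝ)
    (hW : ∀ j k, 0 ≤ W j k)
    (hWrow : ∀ j, ∑ k, W j k = 1)
    (hα : 0 ≤ α) (hlam : lam ∈ Set.Ioo (0 : ℝ) 1) (hβ : β ∈ Set.Ioo (0 : ℝ) 1)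
    (hγ : γ ∈ Set.Ioo (0 : ℝ) 1)
    -- Assumption 1: symmetric layers and positive self-loops on the influence layer
    (hAsymm : ∀ j k, A j k = A k j) (hWsymm : ∀ j k, W j k = W k j)
    (hAdiag : ∀ j, 0 < A j j)
    -- the trajectory of the coevolutionary model: σ t is the agent active at time t
    (x y : ℕ → Fin n → ℝ) (σ : ℕ → Fin n)
    (h0x : ∀ j, x 0 j = -1 ∨ x 0 j = 1)
    (hupx : ∀ t, x (t + 1) (σ t) =
      brSign (deltaFn A W α lam β γ u (x t) (y t) (σ t)) (x t (σ t)))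
    (hupy : ∀ t, y (t + 1) (σ t) =
      (1 - lam) * ((1 - γ) * (∑ j, W (σ t) j * y t j) + γ * u (σ t)) +
        lam * brSign (deltaFn A W α lam β γ u (x t) (y t) (σ t)) (x t (σ t)))
    (hkeep : ∀ t j, j ≠ σ t → x (t + 1) j = x t j ∧ y (t + 1) j = y t j)
    (t : ℕ) (hchange : x (t + 1) (σ t) ≠ x t (σ t)) :
    coevPhi A W α lam β γ u (x (t + 1)) (y (t + 1)) -
        coevPhi A W α lam β γ u (x t) (y t) >
      Finset.univ.inf' ⟨⟨0, by omega⟩, Finset.mem_univ _⟩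
        (fun k => (1 / (β * (1 - lam) * (1 - γ))) * lam * (1 - β) * A k k) ∧
    Finset.univ.inf' ⟨⟨0, by omega⟩, Finset.mem_univ _⟩
        (fun k => (1 / (β * (1 - lam) * (1 - γ))) * lam * (1 - β) * A k k) > 0 := by
  obtain ⟨hlam0, hlam1⟩ := hlam
  obtain ⟨hβ0, hβ1⟩ := hβ
  have hγ1 := hγ.2
  set i := σ t
  have hxi := brSign_trajectory_eq_one_or_neg_one x σ _ h0x hupx
    (fun t j hj => (hkeep t j hj).1) t i
  obtain ⟨hflip, hsign⟩ := brSign_of_ne hxi (hupx t ▸ hchange)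
  refine ⟨(inf'_le _ (mem_univ i)).trans_lt ?_, (lt_inf'_iff _).2 fun k _ => ?_⟩
  · exact lt_coevPhi_sub_of_flip A W α lam β γ u (x t) (y t) (x (t + 1)) (y (t + 1)) i hα
      hlam0.le hlam1 hβ0 hβ1.le hγ1 (hAdiag i).le (hW i i) hAsymm hWsymm (hWrow i)
      (fun j hj => (hkeep t j hj).1) (fun j hj => (hkeep t j hj).2) hxi (by rw [hupx t, hflip])
      hsign (by rw [hupy t, hupx t])
  · have := hAdiag k
    have : 0 < 1 - lam := sub_pos.2 hlam1
    have : 0 < 1 - β := sub_pos.2 hβ1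
    have : 0 < 1 - γ := sub_pos.2 hγ1
    positivity
end

section
/- Consider the simplified coevolutionary model (A = W, α = 0, γ = 0) with homogeneous λ, β ∈ (0,1), W symmetric, irreducible, row-stochastic with w_{ii} > 0 for all i, and let (V_p, V_n) be a partition of the agents into two nonempty disjoint sets such that x* defined by x_i* = +1 for i ∈ V_p and x_i* = -1 for i ∈ V_n is fixed. If λ > max( (d̄_p - d̲_n)/(1 + d̄_p - d̲_n), (d̄_n - d̲_p)/(1 + d̄_n - d̲_p) ), where d̲_p = min_{i∈V_p} Σ_{j∈V_p} w_{ij}, d̄_p = max_{i∈V_p} Σ_{j∈V_p} w_{ij}, d̲_n = min_{i∈V_n} Σ_{j∈V_n} w_{ij}, d̄_n = max_{i∈V_n} Σ_{j∈V_n} w_{ij}, then the unique vector y* satisfying y_i* = (1-λ) Σ_j w_{ij} y_j* + λ x_i* for all i is polarized with respect to (V_p, V_n): y_i* > 0 for all i ∈ V_p and y_i* < 0 for all i ∈ V_n. -/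
open Finset Matrix Filter

/-- The quantity `δ_i(z)` in the simplified model (`A = W`, `α = 0`, `γ = 0`). -/
noncomputable def sDelta {n : ℕ} (w : Fin n → Fin n → ℝ) (lam β : ℝ)
    (x y : Fin n → ℝ) (i : Fin n) : ℝ :=
  2 * lam * β * (1 - lam) * (∑ j, w i j * y j) + (1 - β) * lam * (∑ j, w i j * x j)

/-- `S(d; x_i)`: `+1` if `d > 0`, `-1` if `d < 0`, and `x_i` if `d = 0`. -/
noncomputable def brS (d xi : ℝ) : ℝ := if 0 < d then 1 else if d < 0 then -1 else xi

/-- A state `(x, y)` is an equilibrium of the simplified coevolutionary model if applying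
the update rule to any agent leaves the state unchanged. -/
noncomputable def isEquilibrium {n : ℕ} (w : Fin n → Fin n → ℝ) (lam β : ℝ)
    (x y : Fin n → ℝ) : Prop :=
  ∀ i, brS (sDelta w lam β x y i) (x i) = x i ∧
    (1 - lam) * (∑ j, w i j * y j) + lam * brS (sDelta w lam β x y i) (x i) = y i

/-- A state `(x, y)` is polarized with respect to the partition `(Vp, Vn)`. -/
def Polarized {n : ℕ} (Vp Vn : Finset (Fin n)) (x y : Fin n → ℝ) : Prop :=
  (∀ i ∈ Vp, x i = 1 ∧ 0 < y i) ∧ (∀ i ∈ Vn, x i = -1 ∧ y i < 0)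

/-- A nonnegative matrix (given as a function) is irreducible if for every pair of indices
some power of the matrix has a positive entry there. -/
def FunIrreducible {n : ℕ} (W : Fin n → Fin n → ℝ) : Prop :=
  ∀ i j, ∃ k : ℕ, 0 < ((Matrix.of W) ^ k) i j

/-- Key positivity lemma: under the pointwise gap condition, any fixed point of the
linear opinion update is positive on `Vp`. -/
lemma pos_on_Vp {n : ℕ} (w : Fin n → Fin n → ℝ) (lam : ℝ)
    (hw : ∀ i j, 0 ≤ w i j) (hwrow : ∀ i, ∑ j, w i j = 1)
    (hlam0 : 0 < lam) (hlam1 : lam < 1)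
    (Vp Vn : Finset (Fin n)) (hdisj : Disjoint Vp Vn) (hunion : Vp ∪ Vn = Finset.univ)
    (hVp : Vp.Nonempty) (hVn : Vn.Nonempty)
    (x : Fin n → ℝ) (hxp : ∀ i ∈ Vp, x i = 1) (hxn : ∀ i ∈ Vn, x i = -1)
    (hc : ∀ i ∈ Vp, ∀ k ∈ Vn,
      (1 - lam) * ((∑ j ∈ Vn, w k j) - (∑ j ∈ Vp, w i j)) < lam)
    (y : Fin n → ℝ) (hy : ∀ i, y i = (1 - lam) * (∑ j, w i j * y j) + lam * x i) :
    ∀ i ∈ Vp, 0 < y i := by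
  have hsplit : ∀ i, ∑ j, w i j * y j = ∑ j ∈ Vp, w i j * y j + ∑ j ∈ Vn, w i j * y j := by
    intro i
    rw [show (Finset.univ : Finset (Fin n)) = Vp ∪ Vn from hunion.symm, Finset.sum_union hdisj]
  have hwsplit : ∀ i, (∑ j ∈ Vp, w i j) + (∑ j ∈ Vn, w i j) = 1 := by
    intro i
    rw [← Finset.sum_union hdisj, hunion, hwrow]
  obtain ⟨i0, hi0, ha⟩ := Finset.exists_min_image Vp y hVp
  obtain ⟨k0, hk0, hb⟩ := Finset.exists_min_image Vn y hVn
  set a := y i0 with hadef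
  set b := y k0 with hbdef
  set d := ∑ j ∈ Vp, w i0 j with hddef
  set e := ∑ j ∈ Vn, w k0 j with hedef
  have hd0 : 0 ≤ d := Finset.sum_nonneg fun j _ => hw i0 j
  have he0 : 0 ≤ e := Finset.sum_nonneg fun j _ => hw k0 j
  have hd1 : d ≤ 1 := by
    have := hwsplit i0
    have : 0 ≤ ∑ j ∈ Vn, w i0 j := Finset.sum_nonneg fun j _ => hw i0 j
    linarith [hwsplit i0]
  have he1 : e ≤ 1 := by
    have : 0 ≤ ∑ j ∈ Vp, w k0 j := Finset.sum_nonneg fun j _ => hw k0 j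
    linarith [hwsplit k0]
  -- lower bound for the min over Vp
  have s1 : d * a ≤ ∑ j ∈ Vp, w i0 j * y j := by
    rw [hddef, Finset.sum_mul]
    exact Finset.sum_le_sum fun j hj => mul_le_mul_of_nonneg_left (ha j hj) (hw i0 j)
  have s2 : (1 - d) * b ≤ ∑ j ∈ Vn, w i0 j * y j := by
    have hnd : ∑ j ∈ Vn, w i0 j = 1 - d := by linarith [hwsplit i0]
    rw [← hnd, Finset.sum_mul]
    exact Finset.sum_le_sum fun j hj => mul_le_mul_of_nonneg_left (hb j hj) (hw i0 j)
  have h1 : (1 - lam) * (d * a + (1 - d) * b) + lam ≤ a := by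
    have := hy i0
    rw [hxp i0 hi0, hsplit i0] at this
    nlinarith [mul_le_mul_of_nonneg_left (add_le_add s1 s2) (by linarith : (0:ℝ) ≤ 1 - lam)]
  -- lower bound for the min over Vn
  have s3 : e * b ≤ ∑ j ∈ Vn, w k0 j * y j := by
    rw [hedef, Finset.sum_mul]
    exact Finset.sum_le_sum fun j hj => mul_le_mul_of_nonneg_left (hb j hj) (hw k0 j)
  have s4 : (1 - e) * a ≤ ∑ j ∈ Vp, w k0 j * y j := by
    have hne : ∑ j ∈ Vp, w k0 j = 1 - e := by linarith [hwsplit k0]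
    rw [← hne, Finset.sum_mul]
    exact Finset.sum_le_sum fun j hj => mul_le_mul_of_nonneg_left (ha j hj) (hw k0 j)
  have h2 : (1 - lam) * (e * b + (1 - e) * a) - lam ≤ b := by
    have := hy k0
    rw [hxn k0 hk0, hsplit k0] at this
    nlinarith [mul_le_mul_of_nonneg_left (add_le_add s4 s3) (by linarith : (0:ℝ) ≤ 1 - lam)]
  have hcd : (1 - lam) * (e - d) < lam := hc i0 hi0 k0 hk0
  have hapos : 0 < a := by
    by_contra h
    push_neg at h
    -- combine the two inequalities
    have hC1 : (0:ℝ) < 1 - (1 - lam) * e := by nlinarith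
    have P1 : 0 ≤ (a - ((1 - lam) * (d * a + (1 - d) * b) + lam)) * (1 - (1 - lam) * e) :=
      mul_nonneg (by linarith) (le_of_lt hC1)
    have P2 : 0 ≤ (b - ((1 - lam) * (e * b + (1 - e) * a) - lam)) * ((1 - lam) * (1 - d)) :=
      mul_nonneg (by linarith) (mul_nonneg (by linarith) (by linarith))
    -- a * C ≥ lam * (lam + (1-lam)*(d-e)) with C > 0
    have hC : (0:ℝ) < lam * (1 + (1 - lam) * (1 - d - e)) := by
      nlinarith [mul_le_mul_of_nonneg_left (show d + e - 1 ≤ 1 by linarith)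
        (show (0:ℝ) ≤ 1 - lam by linarith)]
    nlinarith [mul_nonneg (neg_nonneg.2 h) (le_of_lt hC), mul_pos hlam0
      (show (0:ℝ) < lam + (1 - lam) * (d - e) by nlinarith)]
  intro i hi
  exact lt_of_lt_of_le hapos (ha i hi)

theorem stmt14 {n : ℕ} (hn : 2 ≤ n) (w : Fin n → Fin n → ℝ) (lam β : ℝ)
    (hw : ∀ i j, 0 ≤ w i j) (hwrow : ∀ i, ∑ j, w i j = 1)
    (hwsymm : ∀ i j, w i j = w j i) (hwirr : FunIrreducible w)
    (hwdiag : ∀ i, 0 < w i i)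
    (hlam : lam ∈ Set.Ioo (0 : ℝ) 1) (hβ : β ∈ Set.Ioo (0 : ℝ) 1)
    -- a partition of the agents into two nonempty disjoint sets
    (Vp Vn : Finset (Fin n)) (hdisj : Disjoint Vp Vn) (hunion : Vp ∪ Vn = Finset.univ)
    (hVp : Vp.Nonempty) (hVn : Vn.Nonempty)
    -- the fixed polarized action vector
    (xstar : Fin n → ℝ) (hxp : ∀ i ∈ Vp, xstar i = 1) (hxn : ∀ i ∈ Vn, xstar i = -1)
    (dplo dphi dnlo dnhi : ℝ)
    (hdplo : dplo = Vp.inf' hVp fun i => ∑ j ∈ Vp, w i j)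
    (hdphi : dphi = Vp.sup' hVp fun i => ∑ j ∈ Vp, w i j)
    (hdnlo : dnlo = Vn.inf' hVn fun i => ∑ j ∈ Vn, w i j)
    (hdnhi : dnhi = Vn.sup' hVn fun i => ∑ j ∈ Vn, w i j)
    (hcond : lam > max ((dphi - dnlo) / (1 + dphi - dnlo))
      ((dnhi - dplo) / (1 + dnhi - dplo))) :
    (∃! ystar : Fin n → ℝ,
        ∀ i, ystar i = (1 - lam) * (∑ j, w i j * ystar j) + lam * xstar i) ∧
    (∀ ystar : Fin n → ℝ,
        (∀ i, ystar i = (1 - lam) * (∑ j, w i j * ystar j) + lam * xstar i) →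
        (∀ i ∈ Vp, 0 < ystar i) ∧ (∀ i ∈ Vn, ystar i < 0)) := by
  obtain ⟨hlam0, hlam1⟩ := hlam
  -- basic bounds on the degree quantities
  have hwsplit : ∀ i, (∑ j ∈ Vp, w i j) + (∑ j ∈ Vn, w i j) = 1 := by
    intro i
    rw [← Finset.sum_union hdisj, hunion, hwrow]
  have hsumVp_le : ∀ i, ∑ j ∈ Vp, w i j ≤ 1 := by
    intro i
    have : 0 ≤ ∑ j ∈ Vn, w i j := Finset.sum_nonneg fun j _ => hw i j
    linarith [hwsplit i]
  have hsumVn_le : ∀ i, ∑ j ∈ Vn, w i j ≤ 1 := by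
    intro i
    have : 0 ≤ ∑ j ∈ Vp, w i j := Finset.sum_nonneg fun j _ => hw i j
    linarith [hwsplit i]
  have hdnhi_pos : 0 < dnhi := by
    obtain ⟨k, hk⟩ := hVn
    have h1 : w k k ≤ ∑ j ∈ Vn, w k j := Finset.single_le_sum (fun j _ => hw k j) hk
    have h2 : (∑ j ∈ Vn, w k j) ≤ dnhi := by rw [hdnhi]; exact Finset.le_sup' (f := fun i => ∑ j ∈ Vn, w i j) hk
    linarith [hwdiag k]
  have hdphi_pos : 0 < dphi := by
    obtain ⟨k, hk⟩ := hVp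
    have h1 : w k k ≤ ∑ j ∈ Vp, w k j := Finset.single_le_sum (fun j _ => hw k j) hk
    have h2 : (∑ j ∈ Vp, w k j) ≤ dphi := by rw [hdphi]; exact Finset.le_sup' (f := fun i => ∑ j ∈ Vp, w i j) hk
    linarith [hwdiag k]
  have hdplo_le : dplo ≤ 1 := by
    obtain ⟨k, hk⟩ := hVp
    have : dplo ≤ ∑ j ∈ Vp, w k j := by rw [hdplo]; exact Finset.inf'_le (f := fun i => ∑ j ∈ Vp, w i j) hk
    linarith [hsumVp_le k]
  have hdnlo_le : dnlo ≤ 1 := by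
    obtain ⟨k, hk⟩ := hVn
    have : dnlo ≤ ∑ j ∈ Vn, w k j := by rw [hdnlo]; exact Finset.inf'_le (f := fun i => ∑ j ∈ Vn, w i j) hk
    linarith [hsumVn_le k]
  -- the two gap conditions in linear form
  have hgap1 : (1 - lam) * (dnhi - dplo) < lam := by
    have h := lt_of_le_of_lt (le_max_right _ _) hcond
    have hpos : (0:ℝ) < 1 + dnhi - dplo := by linarith
    rw [div_lt_iff₀ hpos] at h
    nlinarith
  have hgap2 : (1 - lam) * (dphi - dnlo) < lam := by
    have h := lt_of_le_of_lt (le_max_left _ _) hcond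
    have hpos : (0:ℝ) < 1 + dphi - dnlo := by linarith
    rw [div_lt_iff₀ hpos] at h
    nlinarith
  -- pointwise conditions for pos_on_Vp
  have hc1 : ∀ i ∈ Vp, ∀ k ∈ Vn,
      (1 - lam) * ((∑ j ∈ Vn, w k j) - (∑ j ∈ Vp, w i j)) < lam := by
    intro i hi k hk
    have h1 : dplo ≤ ∑ j ∈ Vp, w i j := by rw [hdplo]; exact Finset.inf'_le (f := fun i => ∑ j ∈ Vp, w i j) hi
    have h2 : (∑ j ∈ Vn, w k j) ≤ dnhi := by rw [hdnhi]; exact Finset.le_sup' (f := fun i => ∑ j ∈ Vn, w i j) hk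
    nlinarith
  have hc2 : ∀ k ∈ Vn, ∀ i ∈ Vp,
      (1 - lam) * ((∑ j ∈ Vp, w i j) - (∑ j ∈ Vn, w k j)) < lam := by
    intro k hk i hi
    have h1 : dnlo ≤ ∑ j ∈ Vn, w k j := by rw [hdnlo]; exact Finset.inf'_le (f := fun i => ∑ j ∈ Vn, w i j) hk
    have h2 : (∑ j ∈ Vp, w i j) ≤ dphi := by rw [hdphi]; exact Finset.le_sup' (f := fun i => ∑ j ∈ Vp, w i j) hi
    nlinarith
  -- the polarization part
  have hpol : ∀ ystar : Fin n → ℝ,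
      (∀ i, ystar i = (1 - lam) * (∑ j, w i j * ystar j) + lam * xstar i) →
      (∀ i ∈ Vp, 0 < ystar i) ∧ (∀ i ∈ Vn, ystar i < 0) := by
    intro y hy
    constructor
    · exact pos_on_Vp w lam hw hwrow hlam0 hlam1 Vp Vn hdisj hunion hVp hVn
        xstar hxp hxn hc1 y hy
    · have hneg : ∀ i ∈ Vn, 0 < -y i := by
        apply pos_on_Vp w lam hw hwrow hlam0 hlam1 Vn Vp hdisj.symm
          (by rw [Finset.union_comm]; exact hunion) hVn hVp (fun i => -xstar i)
          (fun i hi => by show -xstar i = 1; rw [hxn i hi]; ring)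
          (fun i hi => by show -xstar i = -1; rw [hxp i hi])
          hc2
        intro i
        show -y i = (1 - lam) * (∑ j, w i j * (fun i => -y i) j) + lam * (fun i => -xstar i) i
        simp only [mul_neg, Finset.sum_neg_distrib]
        linear_combination -hy i
      intro i hi
      linarith [hneg i hi]
  refine ⟨?_, hpol⟩
  -- existence and uniqueness via the invertible linear map
  have hnz : Nonempty (Fin n) := ⟨⟨0, by omega⟩⟩
  set L : (Fin n → ℝ) →ₗ[ℝ] (Fin n → ℝ) :=
    LinearMap.id - (1 - lam) • (Matrix.of w).mulVecLin with hLdef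
  have hLapp : ∀ y : Fin n → ℝ, ∀ i, L y i = y i - (1 - lam) * ∑ j, w i j * y j := by
    intro y i
    simp [hLdef, Matrix.mulVecLin_apply, Matrix.mulVec, dotProduct]
  have hker : ∀ z : Fin n → ℝ, L z = 0 → z = 0 := by
    intro z hz
    have hzeq : ∀ i, z i = (1 - lam) * ∑ j, w i j * z j := by
      intro i
      have h := congrFun hz i
      rw [hLapp z i] at h
      simp only [Pi.zero_apply] at h
      linarith
    obtain ⟨i, _, hi⟩ := Finset.exists_max_image Finset.univ (fun j => |z j|)
      Finset.univ_nonempty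
    have hbound : |z i| ≤ (1 - lam) * |z i| := by
      calc |z i| = (1 - lam) * |∑ j, w i j * z j| := by
            rw [hzeq i, abs_mul, abs_of_nonneg (by linarith : (0:ℝ) ≤ 1 - lam)]
        _ ≤ (1 - lam) * ∑ j, |w i j * z j| := by
            apply mul_le_mul_of_nonneg_left (Finset.abs_sum_le_sum_abs _ _) (by linarith)
        _ ≤ (1 - lam) * ∑ j, w i j * |z i| := by
            apply mul_le_mul_of_nonneg_left _ (by linarith)
            apply Finset.sum_le_sum
            intro j _
            rw [abs_mul, abs_of_nonneg (hw i j)]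
            exact mul_le_mul_of_nonneg_left (hi j (Finset.mem_univ j)) (hw i j)
        _ = (1 - lam) * |z i| := by rw [← Finset.sum_mul, hwrow i, one_mul]
    have hzi : |z i| = 0 := by nlinarith [abs_nonneg (z i)]
    funext j
    have := hi j (Finset.mem_univ j)
    rw [hzi] at this
    simpa using abs_eq_zero.mp (le_antisymm this (abs_nonneg _))
  have hinj : Function.Injective L := by
    rw [← LinearMap.ker_eq_bot, LinearMap.ker_eq_bot']
    exact fun z hz => hker z hz
  have hsurj : Function.Surjective L := LinearMap.injective_iff_surjective.1 hinj
  obtain ⟨y0, hy0⟩ := hsurj (fun i => lam * xstar i)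
  have hy0' : ∀ i, y0 i = (1 - lam) * (∑ j, w i j * y0 j) + lam * xstar i := by
    intro i
    have := congrFun hy0 i
    rw [hLapp y0 i] at this
    linarith [this]
  refine ⟨y0, hy0', ?_⟩
  intro y hy
  have hdiff : L (y - y0) = 0 := by
    funext i
    rw [hLapp]
    have h1 := hy i
    have h2 := hy0' i
    have hsum : ∑ j, w i j * (y j - y0 j) = (∑ j, w i j * y j) - ∑ j, w i j * y0 j := by
      simp [mul_sub, Finset.sum_sub_distrib]
    simp only [Pi.sub_apply, Pi.zero_apply]
    rw [hsum]
    linear_combination h1 - h2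
  have := hker _ hdiff
  have : y - y0 = 0 := this
  funext i
  have := congrFun this i
  simpa [sub_eq_zero] using this
end
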